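/- arXiv:1311.0173 — 8 statements merged into one kernel-verified Lean document; each statement's English description precedes it below -/
import Mathlib

section
/- Let f(x) = x^T Q x be a quadratic form with symmetric matrix Q, let f̲ = min_{Δ_n} f, f̄ = max_{Δ_n} f, and Q_max = max_i Q_ii. Then for any r ≥ 1 and all x ∈ Δ_n, B_r(f)(x) − f(x) ≤ (Q_max − f̲)/r ≤ (f̄ − f̲)/r. -/
/-!
Write `w_α(x) = multinomial(α) · x^α` for `|α| = r`, so that `B_r(f)(x) = ∑_α f(α/r) w_α(x)`.
Shifting `α ↦ α - e_i` turns `∑_α α_i w_α(x)` into `r x_i ∑_{|β|=r-1} w_β(x)`, which gives the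
first two moments of the multinomial distribution: `∑ α_i w_α = r x_i` and
`∑ α_i α_j w_α = r(r-1) x_i x_j + δ_ij r x_i` on the simplex. Since `f(α/r) = αᵀQα / r²` is
quadratic in `α`, this yields `B_r(f)(x) = (1/r) ∑ Q_ii x_i + (1 - 1/r) f(x)`, hence
`B_r(f)(x) - f(x) = (∑ Q_ii x_i - f(x)) / r ≤ (Q_max - f̲) / r`, and `Q_max ≤ f̄` because
`Q_ii = f(e_i)`.
-/

open Matrix

/-- Bernstein approximation of order `r` of `f` on the simplex. -/
noncomputable def bern {n : ℕ} (r : ℕ) (f : (Fin n → ℝ) → ℝ) (x : Fin n → ℝ) : ℝ :=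
  ∑ α ∈ Finset.Nat.antidiagonalTuple n r,
    f (fun i => (α i : ℝ) / r) * ((r.factorial : ℝ) / ∏ i, ((α i).factorial : ℝ)) *
      ∏ i, x i ^ α i

open Finset Finset.Nat

section Multinomial

variable {n : ℕ}

noncomputable def multinomialTerm (x : Fin n → ℝ) (α : Fin n → ℕ) : ℝ :=
  Nat.multinomial univ α * ∏ i, x i ^ α i

lemma sum_multinomialTerm (x : Fin n → ℝ) (r : ℕ) :
    ∑ α ∈ antidiagonalTuple n r, multinomialTerm x α = (∑ i, x i) ^ r := by
  rw [sum_pow_eq_sum_piAntidiag, ← piAntidiag_univ_fin_eq_antidiagonalTuple]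
  rfl

lemma sum_add_single (β : Fin n → ℕ) (i : Fin n) :
    ∑ j, (β + Pi.single i 1 : Fin n → ℕ) j = ∑ j, β j + 1 := by
  simp [sum_add_distrib]

lemma prod_factorial_add_single (β : Fin n → ℕ) (i : Fin n) :
    ∏ j, ((β + Pi.single i 1 : Fin n → ℕ) j).factorial = (β i + 1) * ∏ j, (β j).factorial := by
  have h : ∀ j, ((β + Pi.single i 1 : Fin n → ℕ) j).factorial =
      (if j = i then β i + 1 else 1) * (β j).factorial := by
    intro j
    by_cases hj : j = i
    · subst hj; simp [Nat.factorial_succ]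
    · simp [hj]
  rw [prod_congr rfl fun j _ => h j, prod_mul_distrib, prod_ite_eq' univ i]
  simp

lemma succ_mul_multinomial_add_single (β : Fin n → ℕ) (i : Fin n) :
    (β i + 1) * Nat.multinomial univ (β + Pi.single i 1) =
      (∑ j, β j + 1) * Nat.multinomial univ β := by
  apply Nat.eq_of_mul_eq_mul_left (prod_pos fun j _ => (β j).factorial_pos)
  have h := Nat.multinomial_spec univ (β + Pi.single i 1)
  rw [prod_factorial_add_single, sum_add_single, Nat.factorial_succ,
    ← Nat.multinomial_spec univ β] at h
  linear_combination h

lemma prod_pow_add_single (x : Fin n → ℝ) (β : Fin n → ℕ) (i : Fin n) :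
    ∏ j, x j ^ (β + Pi.single i 1 : Fin n → ℕ) j = x i * ∏ j, x j ^ β j := by
  simp_rw [Pi.add_apply, pow_add, prod_mul_distrib, Pi.single_apply, pow_ite, pow_one, pow_zero,
    prod_ite_eq' univ i]
  simp [mul_comm]

lemma succ_mul_multinomialTerm_add_single (x : Fin n → ℝ) (β : Fin n → ℕ) (i : Fin n) :
    (β i + 1) * multinomialTerm x (β + Pi.single i 1) =
      (∑ j, (β j : ℝ) + 1) * x i * multinomialTerm x β := by
  have h := congrArg (Nat.cast (R := ℝ)) (succ_mul_multinomial_add_single β i)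
  push_cast at h
  rw [multinomialTerm, multinomialTerm, prod_pow_add_single]
  linear_combination (x i * ∏ j, x j ^ β j) * h

lemma sum_antidiagonalTuple_succ_eq_sum_add_single {M : Type*} [AddCommMonoid M]
    (i : Fin n) (m : ℕ) {F : (Fin n → ℕ) → M} (hF : ∀ α, α i = 0 → F α = 0) :
    ∑ α ∈ antidiagonalTuple n (m + 1), F α =
      ∑ β ∈ antidiagonalTuple n m, F (β + Pi.single i 1) := by
  symm
  refine sum_bij_ne_zero (fun β _ _ => β + Pi.single i 1) ?_ ?_ ?_ (fun _ _ _ => rfl)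
  · intro β hβ _
    rw [mem_antidiagonalTuple] at hβ ⊢
    rw [sum_add_single, hβ]
  · intro β _ _ γ _ _ h
    exact add_right_cancel h
  · intro α hα hF0
    have hi : Pi.single i 1 ≤ α := by
      intro j
      by_cases hj : j = i
      · subst hj; simpa [Nat.one_le_iff_ne_zero] using fun h => hF0 (hF α h)
      · simp [hj]
    have hα' : α - Pi.single i 1 + Pi.single i 1 = α := tsub_add_cancel_of_le hi
    refine ⟨α - Pi.single i 1, ?_, by rwa [hα'], hα'⟩
    rw [mem_antidiagonalTuple] at hα ⊢
    have := sum_add_single (α - Pi.single i 1) i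
    rw [hα', hα] at this
    omega

lemma sum_mul_multinomialTerm_succ (x : Fin n → ℝ) (i : Fin n) (m : ℕ)
    (G : (Fin n → ℕ) → ℝ) :
    ∑ α ∈ antidiagonalTuple n (m + 1), α i * G α * multinomialTerm x α =
      (m + 1) * x i * ∑ β ∈ antidiagonalTuple n m, G (β + Pi.single i 1) * multinomialTerm x β := by
  rw [sum_antidiagonalTuple_succ_eq_sum_add_single i m (fun α h => by simp [h]), mul_sum]
  refine sum_congr rfl fun β hβ => ?_
  have hm : ∑ j, (β j : ℝ) = m := by exact_mod_cast (mem_antidiagonalTuple.1 hβ)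
  have h := succ_mul_multinomialTerm_add_single x β i
  rw [hm] at h
  simp only [Pi.add_apply, Pi.single_eq_same, Nat.cast_add, Nat.cast_one]
  linear_combination G (β + Pi.single i 1) * h

lemma sum_mul_multinomialTerm (x : Fin n → ℝ) (i : Fin n) (r : ℕ) :
    ∑ α ∈ antidiagonalTuple n r, α i * multinomialTerm x α = r * x i * (∑ j, x j) ^ (r - 1) := by
  cases r with
  | zero => simp [antidiagonalTuple_zero_right]
  | succ m => simpa [sum_multinomialTerm] using sum_mul_multinomialTerm_succ x i m 1

lemma sum_mul_mul_multinomialTerm (x : Fin n → ℝ) (i j : Fin n) (r : ℕ) :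
    ∑ α ∈ antidiagonalTuple n r, α i * α j * multinomialTerm x α =
      r * (r - 1) * x i * x j * (∑ k, x k) ^ (r - 2) +
        if i = j then r * x i * (∑ k, x k) ^ (r - 1) else 0 := by
  cases r with
  | zero => simp [antidiagonalTuple_zero_right]
  | succ m =>
    rw [sum_mul_multinomialTerm_succ x i m (fun α => α j)]
    by_cases h : i = j
    · subst h
      simp [add_mul, sum_add_distrib, sum_mul_multinomialTerm, sum_multinomialTerm]
      ring
    · simp [h, Ne.symm h, sum_mul_multinomialTerm]
      ring

end Multinomial

section Bernstein

variable {n r : ℕ}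

lemma bern_eq_sum_multinomialTerm (f : (Fin n → ℝ) → ℝ) (x : Fin n → ℝ) :
    bern r f x = ∑ α ∈ antidiagonalTuple n r, f (fun i => α i / r) * multinomialTerm x α := by
  refine sum_congr rfl fun α hα => ?_
  have h := Nat.multinomial_spec univ α
  rw [mem_antidiagonalTuple.1 hα] at h
  rw [multinomialTerm, ← mul_assoc, ← h]
  field_simp
  push_cast
  ring

lemma dotProduct_mulVec_self_eq_sum (Q : Matrix (Fin n) (Fin n) ℝ) (y : Fin n → ℝ) :
    y ⬝ᵥ Q *ᵥ y = ∑ i, ∑ j, Q i j * (y i * y j) := by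
  simp only [dotProduct, mulVec, mul_sum]
  exact sum_congr rfl fun i _ => sum_congr rfl fun j _ => by ring

theorem bern_quadForm (Q : Matrix (Fin n) (Fin n) ℝ) (hr : r ≠ 0) {x : Fin n → ℝ}
    (hx : ∑ i, x i = 1) :
    bern r (fun y => y ⬝ᵥ Q *ᵥ y) x =
      1 / r * ∑ i, Q i i * x i + (1 - 1 / r) * (x ⬝ᵥ Q *ᵥ x) := by
  have hr' : (r : ℝ) ≠ 0 := Nat.cast_ne_zero.2 hr
  calc bern r (fun y => y ⬝ᵥ Q *ᵥ y) x
      = ∑ i, ∑ j, Q i j / r ^ 2 *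
          ∑ α ∈ antidiagonalTuple n r, α i * α j * multinomialTerm x α := by
        simp only [bern_eq_sum_multinomialTerm, dotProduct_mulVec_self_eq_sum, sum_mul, mul_sum]
        rw [sum_comm]
        refine sum_congr rfl fun i _ => ?_
        rw [sum_comm]
        refine sum_congr rfl fun j _ => sum_congr rfl fun α _ => ?_
        field_simp
    _ = ∑ i, ∑ j, ((1 - 1 / r) * (Q i j * (x i * x j)) +
          if i = j then 1 / r * (Q i i * x i) else 0) := by
        simp only [sum_mul_mul_multinomialTerm, hx, one_pow, mul_one]
        refine sum_congr rfl fun i _ => sum_congr rfl fun j _ => ?_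
        split_ifs with h
        · subst h; field_simp
        · field_simp; ring
    _ = _ := by
        simp only [sum_add_distrib, sum_ite_eq, mem_univ, if_true, dotProduct_mulVec_self_eq_sum, mul_sum]
        ring

end Bernstein

theorem stmt5_general (n r : ℕ) (hr : 1 ≤ r) (Q : Matrix (Fin n) (Fin n) ℝ)
    (fmin fmax Qmax : ℝ)
    (hmin : IsLeast ((fun y => y ⬝ᵥ Q.mulVec y) '' stdSimplex ℝ (Fin n)) fmin)
    (hmax : IsGreatest ((fun y => y ⬝ᵥ Q.mulVec y) '' stdSimplex ℝ (Fin n)) fmax)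
    (hQmax : IsGreatest (Set.range fun i => Q i i) Qmax)
    (x : Fin n → ℝ) (hx : x ∈ stdSimplex ℝ (Fin n)) :
    bern r (fun y => y ⬝ᵥ Q.mulVec y) x - x ⬝ᵥ Q.mulVec x ≤ (Qmax - fmin) / r ∧
      (Qmax - fmin) / r ≤ (fmax - fmin) / r := by
  have hdiag : ∑ i, Q i i * x i ≤ Qmax :=
    calc ∑ i, Q i i * x i ≤ ∑ i, Qmax * x i :=
          sum_le_sum fun i _ => mul_le_mul_of_nonneg_right (hQmax.2 ⟨i, rfl⟩) (hx.1 i)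
      _ = Qmax := by rw [← mul_sum, hx.2, mul_one]
  have hfx : fmin ≤ x ⬝ᵥ Q *ᵥ x := hmin.2 ⟨x, hx, rfl⟩
  have hQf : Qmax ≤ fmax := by
    obtain ⟨i, rfl⟩ := hQmax.1
    simpa using hmax.2 ⟨_, single_mem_stdSimplex ℝ i, rfl⟩
  refine ⟨?_, by gcongr⟩
  calc bern r (fun y => y ⬝ᵥ Q *ᵥ y) x - x ⬝ᵥ Q *ᵥ x
      = (∑ i, Q i i * x i - x ⬝ᵥ Q *ᵥ x) / r := by
        rw [bern_quadForm Q (by omega) hx.2]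
        field_simp
        ring
    _ ≤ (Qmax - fmin) / r := by gcongr

theorem stmt5 (n r : ℕ) (hn : 0 < n) (hr : 1 ≤ r) (Q : Matrix (Fin n) (Fin n) ℝ)
    (hQ : Q.IsSymm) (fmin fmax Qmax : ℝ)
    (hmin : IsLeast ((fun y => y ⬝ᵥ Q.mulVec y) '' stdSimplex ℝ (Fin n)) fmin)
    (hmax : IsGreatest ((fun y => y ⬝ᵥ Q.mulVec y) '' stdSimplex ℝ (Fin n)) fmax)
    (hQmax : IsGreatest (Set.range fun i => Q i i) Qmax)
    (x : Fin n → ℝ) (hx : x ∈ stdSimplex ℝ (Fin n)) :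
    bern r (fun y => y ⬝ᵥ Q.mulVec y) x - x ⬝ᵥ Q.mulVec x ≤ (Qmax - fmin) / r ∧
      (Qmax - fmin) / r ≤ (fmax - fmin) / r :=
  stmt5_general n r hr Q fmin fmax Qmax hmin hmax hQmax x hx
end

section
/- For any quadratic form f(x) = x^T Q x and integer r ≥ 1, the minimum of f over the regular grid Δ(n,r) satisfies f_{Δ(n,r)} − f̲ ≤ (f̄ − f̲)/r, where f̲ and f̄ are the minimum and maximum of f over Δ_n. -/
/-! Let `x` minimize `f` over `Δ_n`, draw `r` indices independently from the distribution `x`,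
and let `y` be the vector of empirical frequencies of the draws, a point of `Δ(n,r)`. Distinct
draws are independent, so `E[f(y)] = (1 - 1/r) f(x) + (1/r) ∑ᵢ xᵢ Qᵢᵢ`, and `Qᵢᵢ = f(eᵢ) ≤ f̄`.
Some outcome `y` does no worse than the expectation. -/

open Matrix

/-- The regular grid `Δ(n,r)` in the standard simplex. -/
def grid (n r : ℕ) : Set (Fin n → ℝ) :=
  {x | x ∈ stdSimplex ℝ (Fin n) ∧ ∀ i, ∃ m : ℕ, (r : ℝ) * x i = m}

open Finset

theorem Fintype.sum_fin_succ_pi {α M : Type*} [Fintype α] [AddCommMonoid M] {r : ℕ}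
    (g : (Fin (r + 1) → α) → M) :
    ∑ ω, g ω = ∑ a, ∑ ω : Fin r → α, g (Fin.cons a ω) := by
  rw [← Fintype.sum_prod_type']
  exact (Fintype.sum_equiv (Fin.consEquiv fun _ => α) _ _ fun _ => rfl).symm

section IidExpect

variable {ι M : Type*} [Fintype ι] [AddCommMonoid M] [Module ℝ M] (x : ι → ℝ)

/-- The expectation of `g` over `r` independent draws from the weights `x` on `ι`. -/
noncomputable def iidExpect (r : ℕ) (g : (Fin r → ι) → M) : M :=
  ∑ ω, (∏ k, x (ω k)) • g ω

theorem iidExpect_succ {r : ℕ} (g : (Fin (r + 1) → ι) → M) :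
    iidExpect x (r + 1) g =
      iidExpect x r fun ω => ∑ a, x a • g (Fin.cons a ω : Fin (r + 1) → ι) := by
  simp only [iidExpect, Fintype.sum_fin_succ_pi, Fin.prod_univ_succ, Fin.cons_zero,
    Fin.cons_succ, smul_sum, mul_smul]
  rw [sum_comm]
  exact sum_congr rfl fun ω _ => sum_congr rfl fun a _ => smul_comm _ _ _

theorem iidExpect_add {r : ℕ} (g h : (Fin r → ι) → M) :
    iidExpect x r (fun ω => g ω + h ω) = iidExpect x r g + iidExpect x r h := by
  simp only [iidExpect, smul_add, sum_add_distrib]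

theorem iidExpect_const (hx : ∑ i, x i = 1) (r : ℕ) (c : M) :
    iidExpect x r (fun _ => c) = c := by
  rw [iidExpect, ← sum_smul, ← Fintype.sum_pow, hx, one_pow, one_smul]

theorem iidExpect_dotProduct {r : ℕ} (w : ι → ℝ) (g : (Fin r → ι) → ι → ℝ) :
    iidExpect x r (fun ω => w ⬝ᵥ g ω) = w ⬝ᵥ iidExpect x r g := by
  simp only [iidExpect, dotProduct_sum, dotProduct_smul]

theorem iidExpect_smul {r : ℕ} (c : ℝ) (g : (Fin r → ι) → M) :
    iidExpect x r (fun ω => c • g ω) = c • iidExpect x r g := by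
  simp only [iidExpect, smul_sum, smul_comm c]

theorem le_iidExpect (hx : x ∈ stdSimplex ℝ ι) {r : ℕ} {g : (Fin r → ι) → ℝ} {c : ℝ}
    (h : ∀ ω, c ≤ g ω) : c ≤ iidExpect x r g := by
  calc c = iidExpect x r fun _ => c := (iidExpect_const x hx.2 r c).symm
    _ ≤ iidExpect x r g := sum_le_sum fun ω _ =>
      smul_le_smul_of_nonneg_left (h ω) (prod_nonneg fun k _ => hx.1 _)

end IidExpect

section DrawCounts

variable {ι : Type*} [DecidableEq ι]

noncomputable def drawCounts {r : ℕ} (ω : Fin r → ι) : ι → ℝ :=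
  ∑ k, Pi.single (ω k) 1

theorem drawCounts_cons {r : ℕ} (a : ι) (ω : Fin r → ι) :
    drawCounts (Fin.cons a ω : Fin (r + 1) → ι) = Pi.single a 1 + drawCounts ω := by
  simp [drawCounts, Fin.sum_univ_succ]

theorem sum_drawCounts [Fintype ι] {r : ℕ} (ω : Fin r → ι) : ∑ i, drawCounts ω i = r := by
  simp only [drawCounts, Finset.sum_apply]
  rw [sum_comm]
  simp

theorem drawCounts_eq_card {r : ℕ} (ω : Fin r → ι) (i : ι) :
    drawCounts ω i = #{k | ω k = i} := by
  simp [drawCounts, Finset.sum_apply, Pi.single_apply, eq_comm]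

variable [Fintype ι] {x : ι → ℝ}

theorem iidExpect_drawCounts (hx : ∑ i, x i = 1) (r : ℕ) :
    iidExpect x r drawCounts = (r : ℝ) • x := by
  induction r with
  | zero => simp [iidExpect, drawCounts]
  | succ r ih =>
    have mean_single_add (v : ι → ℝ) : ∑ a, x a • (Pi.single a 1 + v) = x + v := by
      simp only [smul_add, sum_add_distrib, ← sum_smul, hx, one_smul, ← Pi.single_smul',
        smul_eq_mul, mul_one, univ_sum_single]
    simp only [iidExpect_succ, drawCounts_cons, mean_single_add]
    rw [iidExpect_add, iidExpect_const x hx, ih]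
    push_cast
    module

theorem sum_mul_quadForm_single_add (hx : ∑ i, x i = 1) (Q : Matrix ι ι ℝ) (v : ι → ℝ) :
    ∑ a, x a * ((Pi.single a 1 + v) ⬝ᵥ Q *ᵥ (Pi.single a 1 + v))
      = ∑ a, x a * Q a a + (x ᵥ* Q + Q *ᵥ x) ⬝ᵥ v + v ⬝ᵥ Q *ᵥ v := by
  have expand (a : ι) : (Pi.single a 1 + v) ⬝ᵥ Q *ᵥ (Pi.single a 1 + v)
      = Q a a + (Q *ᵥ v) a + (v ᵥ* Q) a + v ⬝ᵥ Q *ᵥ v := by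
    simp only [mulVec_add, mulVec_single, MulOpposite.op_one, one_smul, dotProduct_add,
      add_dotProduct, single_dotProduct, col_apply, one_mul]
    rw [show v ⬝ᵥ Q.col a = (v ᵥ* Q) a from rfl]
    ring
  have hQv : ∑ a, x a * (Q *ᵥ v) a = (x ᵥ* Q) ⬝ᵥ v := by
    rw [← dotProduct_mulVec]; rfl
  have hvQ : ∑ a, x a * (v ᵥ* Q) a = (Q *ᵥ x) ⬝ᵥ v := by
    rw [dotProduct_comm, dotProduct_mulVec]; exact dotProduct_comm _ _
  simp only [expand, mul_add, sum_add_distrib, ← sum_mul, hx, one_mul, hQv, hvQ, add_dotProduct]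
  ring

theorem iidExpect_quadForm_drawCounts (hx : ∑ i, x i = 1) (Q : Matrix ι ι ℝ) (r : ℕ) :
    iidExpect x r (fun ω => drawCounts ω ⬝ᵥ Q *ᵥ drawCounts ω)
      = r * (r - 1) * (x ⬝ᵥ Q *ᵥ x) + r * ∑ i, x i * Q i i := by
  induction r with
  | zero => simp [iidExpect, drawCounts]
  | succ r ih =>
    simp only [iidExpect_succ, drawCounts_cons, smul_eq_mul, sum_mul_quadForm_single_add hx]
    rw [iidExpect_add, iidExpect_add, iidExpect_const x hx, iidExpect_dotProduct,
      iidExpect_drawCounts hx, ih]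
    simp only [dotProduct_smul, add_dotProduct, ← dotProduct_mulVec, dotProduct_comm (Q *ᵥ x) x]
    push_cast
    ring

theorem iidExpect_quadForm_inv_smul_drawCounts (hx : ∑ i, x i = 1) (Q : Matrix ι ι ℝ) {r : ℕ}
    (hr : r ≠ 0) :
    iidExpect x r (fun ω => ((r : ℝ)⁻¹ • drawCounts ω) ⬝ᵥ Q *ᵥ ((r : ℝ)⁻¹ • drawCounts ω))
      = x ⬝ᵥ Q *ᵥ x + (∑ i, x i * Q i i - x ⬝ᵥ Q *ᵥ x) / r := by
  simp only [mulVec_smul, dotProduct_smul, smul_dotProduct, smul_smul]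
  rw [iidExpect_smul, iidExpect_quadForm_drawCounts hx, smul_eq_mul]
  field_simp
  ring

end DrawCounts

theorem inv_smul_drawCounts_mem_grid {n r : ℕ} (hr : r ≠ 0) (ω : Fin r → Fin n) :
    (r : ℝ)⁻¹ • drawCounts ω ∈ grid n r := by
  refine ⟨⟨fun i => ?_, ?_⟩, fun i => ⟨#{k | ω k = i}, ?_⟩⟩
  · simp only [Pi.smul_apply, drawCounts_eq_card, smul_eq_mul]
    positivity
  · simp [← mul_sum, sum_drawCounts, hr]
  · simp [drawCounts_eq_card, hr]

theorem stmt6_general (n r : ℕ) (hr : 1 ≤ r) (Q : Matrix (Fin n) (Fin n) ℝ)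
    (fmin fmax fgrid : ℝ)
    (hmin : IsLeast ((fun y => y ⬝ᵥ Q.mulVec y) '' stdSimplex ℝ (Fin n)) fmin)
    (hmax : IsGreatest ((fun y => y ⬝ᵥ Q.mulVec y) '' stdSimplex ℝ (Fin n)) fmax)
    (hgrid : IsLeast ((fun y => y ⬝ᵥ Q.mulVec y) '' grid n r) fgrid) :
    fgrid - fmin ≤ (fmax - fmin) / r := by
  obtain ⟨x, hx, rfl⟩ := hmin.1
  have hr0 : r ≠ 0 := by omega
  have hdiag : ∑ i, x i * Q i i ≤ fmax := by
    have hdiag_le i : Q i i ≤ fmax := hmax.2 ⟨Pi.single i 1, single_mem_stdSimplex ℝ i, by simp⟩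
    calc ∑ i, x i * Q i i ≤ ∑ i, x i * fmax :=
          sum_le_sum fun i _ => mul_le_mul_of_nonneg_left (hdiag_le i) (hx.1 i)
      _ = fmax := by rw [← sum_mul, hx.2, one_mul]
  have hgridE := le_iidExpect x hx fun ω =>
    hgrid.2 ⟨(r : ℝ)⁻¹ • drawCounts ω, inv_smul_drawCounts_mem_grid hr0 ω, rfl⟩
  rw [iidExpect_quadForm_inv_smul_drawCounts hx.2 Q hr0] at hgridE
  have : (∑ i, x i * Q i i - x ⬝ᵥ Q *ᵥ x) / r ≤ (fmax - x ⬝ᵥ Q *ᵥ x) / r := by gcongr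
  linarith

theorem stmt6 (n r : ℕ) (hr : 1 ≤ r) (Q : Matrix (Fin n) (Fin n) ℝ) (hQ : Q.IsSymm)
    (fmin fmax fgrid : ℝ)
    (hmin : IsLeast ((fun y => y ⬝ᵥ Q.mulVec y) '' stdSimplex ℝ (Fin n)) fmin)
    (hmax : IsGreatest ((fun y => y ⬝ᵥ Q.mulVec y) '' stdSimplex ℝ (Fin n)) fmax)
    (hgrid : IsLeast ((fun y => y ⬝ᵥ Q.mulVec y) '' grid n r) fgrid) :
    fgrid - fmin ≤ (fmax - fmin) / r :=
  stmt6_general n r hr Q fmin fmax fgrid hmin hmax hgrid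
end

section
/- For f(x) = Σ_{i=1}^n x_i^2 on the standard simplex Δ_n, with r = kn + s where k ≥ 0 and 0 ≤ s < n, the minimum of f over the regular grid Δ(n,r) equals 1/n + s(n−s)/(n·r^2). -/
/-!
On the grid, `x = c / r` for a vector `c` of natural numbers summing to `r = kn + s`, so
`∑ xᵢ² = ∑ cᵢ² / r²`. Writing `cᵢ = k + dᵢ` with `∑ dᵢ = s` gives
`∑ cᵢ² = k²n + 2ks + ∑ dᵢ² ≥ k²n + 2ks + s` since `d ≤ d²` for integers, with equality exactly
when every `dᵢ ∈ {0, 1}`; and `(k²n + 2ks + s) / r² = 1/n + s(n-s)/(nr²)`.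
-/

open Finset

theorem sum_sq_ge_of_sum_eq {ι : Type*} [Fintype ι] (m : ι → ℤ) (k s : ℤ)
    (hm : ∑ i, m i = k * Fintype.card ι + s) :
    k ^ 2 * Fintype.card ι + 2 * k * s + s ≤ ∑ i, m i ^ 2 := by
  have hdev : ∑ i, (m i - k) = s := by
    simp only [sum_sub_distrib, hm, sum_const, card_univ, nsmul_eq_mul]
    ring
  have hsq : ∑ i, (m i - k) ^ 2 = ∑ i, m i ^ 2 - 2 * k * ∑ i, m i + Fintype.card ι * k ^ 2 := by
    simp only [sub_sq, sum_add_distrib, sum_sub_distrib, ← mul_sum, ← sum_mul, sum_const,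
      card_univ, nsmul_eq_mul]
    ring
  have := sum_le_sum fun i (_ : i ∈ univ) => Int.le_self_sq (m i - k)
  rw [hdev, hsq, hm] at this
  linarith

theorem isLeast_sum_sq_stdSimplex {ι : Type*} [Fintype ι] [Nonempty ι] :
    IsLeast ((fun x : ι → ℝ => ∑ i, x i ^ 2) '' stdSimplex ℝ ι) (1 / Fintype.card ι) := by
  have hcard : (0 : ℝ) < Fintype.card ι := by exact_mod_cast Fintype.card_pos
  constructor
  · refine ⟨fun _ => 1 / Fintype.card ι, ⟨fun _ => by positivity, ?_⟩, ?_⟩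
    · simp [hcard.ne']
    · simp only [sum_const, card_univ, nsmul_eq_mul]
      field_simp
  · rintro _ ⟨x, ⟨-, hx⟩, rfl⟩
    have cauchy_schwarz := sq_sum_le_card_mul_sum_sq (s := univ) (f := x)
    rw [hx, card_univ] at cauchy_schwarz
    rw [div_le_iff₀ hcard]
    linarith

def balancedCounts (n k s : ℕ) : Fin n → ℕ := fun i => k + if (i : ℕ) < s then 1 else 0

theorem sum_balancedCounts {n s : ℕ} (k : ℕ) (hs : s ≤ n) :
    ∑ i, balancedCounts n k s i = k * n + s := by
  simp only [balancedCounts, sum_add_distrib, sum_const, card_univ, Fintype.card_fin,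
    smul_eq_mul, sum_boole, Nat.cast_id, Fin.card_filter_val_lt, min_eq_right hs]
  ring

theorem sum_sq_balancedCounts {n s : ℕ} (k : ℕ) (hs : s ≤ n) :
    ∑ i, balancedCounts n k s i ^ 2 = k ^ 2 * n + 2 * k * s + s := by
  have hsq : ∀ i, balancedCounts n k s i ^ 2 = k ^ 2 + 2 * k * (if (i : ℕ) < s then 1 else 0)
      + (if (i : ℕ) < s then 1 else 0) := by
    intro i; unfold balancedCounts; split_ifs <;> ring
  simp only [hsq, sum_add_distrib, ← mul_sum, sum_const, card_univ, Fintype.card_fin,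
    smul_eq_mul, sum_boole, Nat.cast_id, Fin.card_filter_val_lt, min_eq_right hs]
  ring

section Grid

variable {n r : ℕ}

theorem grid_zero : grid n 0 = stdSimplex ℝ (Fin n) := by
  ext x
  simpa [grid] using fun _ _ => ⟨0, by simp⟩

theorem div_mem_grid (c : Fin n → ℕ) (hc : ∑ i, c i = r) (hr : 0 < r) :
    (fun i => (c i : ℝ) / r) ∈ grid n r := by
  have hrR : (r : ℝ) ≠ 0 := by positivity
  refine ⟨⟨fun _ => by positivity, ?_⟩, fun i => ⟨c i, mul_div_cancel₀ _ hrR⟩⟩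
  rw [← sum_div, div_eq_one_iff_eq hrR]
  exact_mod_cast hc

theorem exists_counts_of_mem_grid {x : Fin n → ℝ} (hx : x ∈ grid n r) (hr : 0 < r) :
    ∃ c : Fin n → ℕ, ∑ i, c i = r ∧ x = fun i => (c i : ℝ) / r := by
  have hrR : (r : ℝ) ≠ 0 := by positivity
  obtain ⟨⟨-, hsum⟩, hint⟩ := hx
  choose c hc using hint
  refine ⟨c, ?_, funext fun i => by rw [← hc i, mul_div_cancel_left₀ _ hrR]⟩
  have : ((∑ i, c i : ℕ) : ℝ) = r := by
    push_cast
    rw [← sum_congr rfl fun i _ => hc i, ← mul_sum, hsum, mul_one]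
  exact_mod_cast this

end Grid

theorem sum_sq_div {ι : Type*} [Fintype ι] (c : ι → ℕ) (r : ℕ) :
    ∑ i, ((c i : ℝ) / r) ^ 2 = ((∑ i, c i ^ 2 : ℕ) : ℝ) / r ^ 2 := by
  push_cast
  simp only [div_pow, sum_div]

theorem one_div_add_eq_of_eq_mul_add {n r k s : ℕ} (hr : r = k * n + s) (hn : 0 < n)
    (hr0 : 0 < r) :
    1 / n + (s : ℝ) * ((n : ℝ) - s) / (n * (r : ℝ) ^ 2)
      = ((k ^ 2 * n + 2 * k * s + s : ℕ) : ℝ) / r ^ 2 := by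
  have : (0 : ℝ) < n := by exact_mod_cast hn
  have : (0 : ℝ) < r := by exact_mod_cast hr0
  have hrR : (r : ℝ) = k * n + s := by exact_mod_cast hr
  push_cast
  field_simp
  rw [hrR]
  ring

theorem stmt7 (n r k s : ℕ) (hs : s < n) (hr : r = k * n + s) :
    IsLeast ((fun x : Fin n → ℝ => ∑ i, x i ^ 2) '' grid n r)
      (1 / n + (s : ℝ) * ((n : ℝ) - s) / (n * (r : ℝ) ^ 2)) := by
  have : Nonempty (Fin n) := ⟨⟨0, by omega⟩⟩
  rcases Nat.eq_zero_or_pos r with rfl | hr0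
  · obtain rfl : s = 0 := by omega
    simpa [grid_zero] using isLeast_sum_sq_stdSimplex (ι := Fin n)
  rw [one_div_add_eq_of_eq_mul_add hr (by omega) hr0]
  constructor
  · refine ⟨_, div_mem_grid (balancedCounts n k s) ?_ hr0, ?_⟩
    · rw [sum_balancedCounts k hs.le, hr]
    · simp only [sum_sq_div, sum_sq_balancedCounts k hs.le]
  · rintro _ ⟨x, hx, rfl⟩
    obtain ⟨c, hc, rfl⟩ := exists_counts_of_mem_grid hx hr0
    simp only [sum_sq_div]
    gcongr
    have := sum_sq_ge_of_sum_eq (fun i => (c i : ℤ)) k s (by simp [← Nat.cast_sum, hc, hr])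
    simp only [Fintype.card_fin] at this
    exact_mod_cast this
end

section
/- For any cubic homogeneous polynomial f in n variables and any integer r ≥ 2, one has max_{x∈Δ_n} (B_r(f)(x) − f(x)) ≤ (4/r − 4/r^2)·(f̄ − f̲), where f̲, f̄ are the min and max of f over Δ_n. -/
/-!
Write `W_α(x) = r!/α! · x^α` for the multinomial weights, so that `Bᵣ f (x) = Σ_α f(α/r) W_α(x)`.
Shifting `α ↦ α - d` gives the falling-factorial moments `Σ_α ∏ₜ (αₜ)_{dₜ} W_α(x) = r_{|d|} x^d`
on the hyperplane `Σ x = 1`, and writing `αᵢαⱼαₖ` in falling factorials yields the moments of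
degree three. For a cubic form `f` they give the exact identity
`r² Bᵣ f = (r-1)(r-2) f + 4(r-1) B₂ f + (2-r) Σ_c x_c f(e_c)`,
checked on the monomials `yᵢyⱼyₖ` and extended linearly. On the simplex `B₂ f ≤ f̄`, while
`f(x)` and the convex combination `Σ_c x_c f(e_c)` are `≥ f̲`, so `r² (Bᵣ f - f) ≤ 4(r-1)(f̄ - f̲)`.
-/

open Finset

lemma Finsupp.exists_eq_single_add_single_add_single {σ : Type*} {d : σ →₀ ℕ}
    (hd : d.degree = 3) : ∃ i j k, d = single i 1 + single j 1 + single k 1 := by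
  classical
  obtain ⟨i, j, k, h⟩ := Multiset.card_eq_three.1 ((card_toMultiset d).trans hd)
  refine ⟨i, j, k, ?_⟩
  rw [← toMultiset_toFinsupp d, h]
  simp [Multiset.insert_eq_cons, ← Multiset.singleton_add, add_assoc]

lemma Nat.self_mul_descFactorial (a m : ℕ) :
    a * a.descFactorial m = a.descFactorial (m + 1) + m * a.descFactorial m := by
  rw [Nat.descFactorial_succ, ← add_mul]
  rcases le_or_gt m a with h | h
  · rw [Nat.sub_add_cancel h]
  · simp [Nat.descFactorial_eq_zero_iff_lt.2 h]

lemma Nat.cast_descFactorial_three {S : Type*} [CommRing S] (a : ℕ) :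
    (a.descFactorial 3 : S) = a * (a - 1) * (a - 2) := by
  rcases a with _ | _ | a <;> simp [Nat.descFactorial_succ]; ring

lemma le_sum_mul_of_mem_stdSimplex {ι : Type*} [Fintype ι] {x : ι → ℝ}
    (hx : x ∈ stdSimplex ℝ ι) {a : ι → ℝ} {m : ℝ} (h : ∀ c, m ≤ a c) :
    m ≤ ∑ c, x c * a c :=
  calc m = ∑ c, x c * m := by rw [← sum_mul, hx.2, one_mul]
    _ ≤ ∑ c, x c * a c := sum_le_sum fun c _ => mul_le_mul_of_nonneg_left (h c) (hx.1 c)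

section

variable {n : ℕ}

noncomputable def bernWeight (r : ℕ) (α : Fin n → ℕ) (x : Fin n → ℝ) : ℝ :=
  (r.factorial : ℝ) / (∏ i, ((α i).factorial : ℝ)) * ∏ i, x i ^ α i

lemma bern_eq_sum_mul_bernWeight (r : ℕ) (f : (Fin n → ℝ) → ℝ) (x : Fin n → ℝ) :
    bern r f x
      = ∑ α ∈ Nat.antidiagonalTuple n r, f (fun i => (α i : ℝ) / r) * bernWeight r α x := by
  simp only [bern, bernWeight, mul_assoc]

lemma bernWeight_eq_multinomial {r : ℕ} {α : Fin n → ℕ} (hα : ∑ i, α i = r) (x : Fin n → ℝ) :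
    bernWeight r α x = Nat.multinomial univ α * ∏ i, x i ^ α i := by
  have hspec := Nat.multinomial_spec univ α
  rw [hα] at hspec
  rw [bernWeight, ← hspec]
  push_cast
  field_simp

lemma sum_bernWeight (r : ℕ) (x : Fin n → ℝ) :
    ∑ α ∈ Nat.antidiagonalTuple n r, bernWeight r α x = (∑ i, x i) ^ r := by
  rw [← piAntidiag_univ_fin_eq_antidiagonalTuple, sum_pow_eq_sum_piAntidiag]
  exact sum_congr rfl fun α hα => bernWeight_eq_multinomial (mem_piAntidiag.1 hα).1 x

lemma bernWeight_nonneg (r : ℕ) (α : Fin n → ℕ) {x : Fin n → ℝ} (hx : ∀ i, 0 ≤ x i) :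
    0 ≤ bernWeight r α x :=
  mul_nonneg (by positivity) (prod_nonneg fun i _ => pow_nonneg (hx i) _)

lemma cast_div_mem_stdSimplex {r : ℕ} (hr : r ≠ 0) {α : Fin n → ℕ}
    (hα : α ∈ Nat.antidiagonalTuple n r) :
    (fun i => (α i : ℝ) / r) ∈ stdSimplex ℝ (Fin n) := by
  refine ⟨fun i => by positivity, ?_⟩
  rw [← sum_div, ← Nat.cast_sum, Nat.mem_antidiagonalTuple.1 hα]
  field_simp

lemma bern_le_of_forall_le {r : ℕ} (hr : r ≠ 0) {f : (Fin n → ℝ) → ℝ} {M : ℝ}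
    (hM : ∀ y ∈ stdSimplex ℝ (Fin n), f y ≤ M) {x : Fin n → ℝ}
    (hx : x ∈ stdSimplex ℝ (Fin n)) : bern r f x ≤ M :=
  calc bern r f x ≤ ∑ α ∈ Nat.antidiagonalTuple n r, M * bernWeight r α x := by
        rw [bern_eq_sum_mul_bernWeight]
        exact sum_le_sum fun α hα => mul_le_mul_of_nonneg_right
          (hM _ (cast_div_mem_stdSimplex hr hα)) (bernWeight_nonneg r α hx.1)
    _ = M := by rw [← mul_sum, sum_bernWeight, hx.2, one_pow, mul_one]

lemma bern_sum_mul {ι : Type*} (r : ℕ) (s : Finset ι) (c : ι → ℝ) (g : ι → (Fin n → ℝ) → ℝ)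
    (x : Fin n → ℝ) :
    bern r (fun y => ∑ d ∈ s, c d * g d y) x = ∑ d ∈ s, c d * bern r (g d) x := by
  simp only [bern_eq_sum_mul_bernWeight, sum_mul, mul_sum]
  rw [sum_comm]
  simp only [mul_assoc]

def descFactorialProd (d α : Fin n → ℕ) : ℕ := ∏ t, (α t).descFactorial (d t)

lemma descFactorialProd_eq_zero {d α : Fin n → ℕ} (h : ¬ d ≤ α) : descFactorialProd d α = 0 := by
  obtain ⟨t, ht⟩ : ∃ t, α t < d t := by simpa [Pi.le_def] using h
  exact prod_eq_zero (mem_univ t) (Nat.descFactorial_eq_zero_iff_lt.2 ht)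

lemma mul_descFactorialProd (i : Fin n) (d α : Fin n → ℕ) :
    α i * descFactorialProd d α
      = descFactorialProd (d + Pi.single i 1) α + d i * descFactorialProd d α := by
  have hrest : ∏ t ∈ {i}ᶜ, (α t).descFactorial (d t + Pi.single (M := fun _ => ℕ) i 1 t)
      = ∏ t ∈ {i}ᶜ, (α t).descFactorial (d t) :=
    prod_congr rfl fun t ht => by simp [(by simpa using ht : t ≠ i)]
  simp only [descFactorialProd, Fintype.prod_eq_mul_prod_compl i, Pi.add_apply,
    Pi.single_eq_same, hrest, ← mul_assoc, ← add_mul, Nat.self_mul_descFactorial]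

lemma mul_mul_eq_descFactorialProd (i j k : Fin n) (α : Fin n → ℕ) :
    α i * α j * α k = descFactorialProd (Pi.single k 1 + Pi.single j 1 + Pi.single i 1) α
      + ((Pi.single k 1 : Fin n → ℕ) i + (Pi.single j 1 : Fin n → ℕ) i)
        * descFactorialProd (Pi.single k 1 + Pi.single j 1) α
      + (Pi.single k 1 : Fin n → ℕ) j * (descFactorialProd (Pi.single k 1 + Pi.single i 1) α
        + (Pi.single k 1 : Fin n → ℕ) i * descFactorialProd (Pi.single k 1) α) := by
  have h0 : descFactorialProd 0 α = 1 := by simp [descFactorialProd]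
  have hk := mul_descFactorialProd k 0 α
  have hjk := mul_descFactorialProd j (Pi.single k 1) α
  have hik := mul_descFactorialProd i (Pi.single k 1) α
  have hijk := mul_descFactorialProd i (Pi.single k 1 + Pi.single j 1) α
  simp only [h0, zero_add, Pi.zero_apply, add_zero, mul_one] at hk
  simp only [Pi.add_apply] at hijk
  rw [mul_assoc, hk, hjk, mul_add, hijk, mul_left_comm, hik]

lemma sum_antidiagonalTuple_eq_sum_add {M : Type*} [AddCommMonoid M] {r : ℕ} {d : Fin n → ℕ}
    (hd : ∑ t, d t ≤ r) (G : (Fin n → ℕ) → M) (hG : ∀ α, ¬ d ≤ α → G α = 0) :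
    ∑ α ∈ Nat.antidiagonalTuple n r, G α
      = ∑ β ∈ Nat.antidiagonalTuple n (r - ∑ t, d t), G (β + d) := by
  symm
  refine sum_bij_ne_zero (fun β _ _ => β + d) (fun β hβ _ => ?_)
    (fun _ _ _ _ _ _ h => add_right_cancel h) (fun α hα hGα => ?_) (fun _ _ _ => rfl)
  · rw [Nat.mem_antidiagonalTuple] at hβ ⊢
    simp only [Pi.add_apply, sum_add_distrib, hβ]
    omega
  · have hdα : d ≤ α := by_contra fun h => hGα (hG α h)
    refine ⟨α - d, ?_, by rwa [tsub_add_cancel_of_le hdα], tsub_add_cancel_of_le hdα⟩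
    have hsum : ∑ t, (α - d) t + ∑ t, d t = ∑ t, α t := by
      rw [← sum_add_distrib]
      exact sum_congr rfl fun t _ => Nat.sub_add_cancel (hdα t)
    rw [Nat.mem_antidiagonalTuple] at hα ⊢
    omega

lemma descFactorialProd_add_mul_bernWeight {r : ℕ} {d β : Fin n → ℕ} (hd : ∑ t, d t ≤ r)
    (x : Fin n → ℝ) :
    (descFactorialProd d (β + d) : ℝ) * bernWeight r (β + d) x
      = r.descFactorial (∑ t, d t) * (∏ t, x t ^ d t) * bernWeight (r - ∑ t, d t) β x := by
  have hfac (t : Fin n) :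
      ((β t + d t).factorial : ℝ) = (β t).factorial * (β t + d t).descFactorial (d t) := by
    rw [← Nat.cast_mul, ← Nat.factorial_mul_descFactorial (Nat.le_add_left _ _),
      Nat.add_sub_cancel]
  have hr : (r.factorial : ℝ) = (r - ∑ t, d t).factorial * r.descFactorial (∑ t, d t) := by
    rw [← Nat.cast_mul, Nat.factorial_mul_descFactorial hd]
  have hne : (∏ t, ((β t + d t).descFactorial (d t) : ℝ)) ≠ 0 :=
    prod_ne_zero_iff.2 fun t _ => by
      exact_mod_cast (Nat.descFactorial_eq_zero_iff_lt.not.2 (by omega))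
  simp only [descFactorialProd, bernWeight, Pi.add_apply, hfac, hr, pow_add, prod_mul_distrib]
  push_cast
  field_simp

lemma sum_descFactorialProd_mul_bernWeight (r : ℕ) (d : Fin n → ℕ) (x : Fin n → ℝ) :
    ∑ α ∈ Nat.antidiagonalTuple n r, (descFactorialProd d α : ℝ) * bernWeight r α x
      = r.descFactorial (∑ t, d t) * (∏ t, x t ^ d t) * (∑ t, x t) ^ (r - ∑ t, d t) := by
  rcases le_or_gt (∑ t, d t) r with hd | hd
  · rw [sum_antidiagonalTuple_eq_sum_add hd _ fun α h => by simp [descFactorialProd_eq_zero h]]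
    simp only [descFactorialProd_add_mul_bernWeight hd, ← mul_sum, sum_bernWeight]
  · rw [Nat.descFactorial_eq_zero_iff_lt.2 hd, Nat.cast_zero, zero_mul, zero_mul]
    refine sum_eq_zero fun α hα => ?_
    have hdα : ¬ d ≤ α := fun h => by
      have := sum_le_sum fun t (_ : t ∈ univ) => h t
      rw [Nat.mem_antidiagonalTuple.1 hα] at this
      omega
    simp [descFactorialProd_eq_zero hdα]

lemma sum_mul_mul_mul_bernWeight (r : ℕ) (i j k : Fin n) {x : Fin n → ℝ}
    (hx : ∑ t, x t = 1) :
    ∑ α ∈ Nat.antidiagonalTuple n r, (α i * α j * α k : ℝ) * bernWeight r α x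
      = r.descFactorial 3 * (x i * x j * x k)
        + r.descFactorial 2 * (((if i = j then 1 else 0) + (if i = k then 1 else 0)) * x j * x k
          + (if j = k then 1 else 0) * x i * x k)
        + r * ((if i = k then 1 else 0) * (if j = k then 1 else 0) * x k) := by
  have hmoment := fun d => sum_descFactorialProd_mul_bernWeight r d x
  simp only [hx, one_pow, mul_one] at hmoment
  have hcube := fun α => congrArg (Nat.cast (R := ℝ)) (mul_mul_eq_descFactorialProd i j k α)
  push_cast at hcube
  simp only [hcube, add_mul, mul_add, sum_add_distrib, mul_assoc, ← mul_sum, hmoment]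
  simp only [Pi.add_apply, sum_add_distrib, pow_add, prod_mul_distrib, Pi.single_apply,
    sum_ite_eq', mem_univ, if_true, pow_ite, pow_one, pow_zero, prod_ite_eq', Nat.cast_ite,
    Nat.cast_one, Nat.cast_zero, Nat.descFactorial_one]
  ring

lemma bern_mul_mul_eq {r : ℕ} (hr : r ≠ 0) (i j k : Fin n) {x : Fin n → ℝ}
    (hx : ∑ t, x t = 1) :
    (r : ℝ) ^ 3 * bern r (fun y => y i * y j * y k) x
      = r.descFactorial 3 * (x i * x j * x k)
        + r.descFactorial 2 * (((if i = j then 1 else 0) + (if i = k then 1 else 0)) * x j * x k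
          + (if j = k then 1 else 0) * x i * x k)
        + r * ((if i = k then 1 else 0) * (if j = k then 1 else 0) * x k) := by
  rw [← sum_mul_mul_mul_bernWeight r i j k hx, bern_eq_sum_mul_bernWeight, mul_sum]
  refine sum_congr rfl fun α _ => ?_
  field_simp

lemma sum_mul_single_mul_single_mul_single (x : Fin n → ℝ) (i j k : Fin n) :
    ∑ c, x c * ((Pi.single c 1 : Fin n → ℝ) i * (Pi.single c 1 : Fin n → ℝ) j
      * (Pi.single c 1 : Fin n → ℝ) k)
      = (if i = k then 1 else 0) * (if j = k then 1 else 0) * x k := by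
  rw [sum_eq_single k]
  · by_cases hik : i = k <;> by_cases hjk : j = k <;> simp [hik, hjk]
  · intro c _ hc
    simp [Pi.single_apply, hc.symm]
  · simp

noncomputable def bernCubicDefect (r : ℕ) (f : (Fin n → ℝ) → ℝ) (x : Fin n → ℝ) : ℝ :=
  r ^ 2 * bern r f x - ((r - 1) * (r - 2) * f x + 4 * (r - 1) * bern 2 f x
    + (2 - r) * ∑ c, x c * f (Pi.single c 1))

lemma bernCubicDefect_sum_mul {ι : Type*} (r : ℕ) (s : Finset ι) (c : ι → ℝ)
    (g : ι → (Fin n → ℝ) → ℝ) (x : Fin n → ℝ) :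
    bernCubicDefect r (fun y => ∑ d ∈ s, c d * g d y) x
      = ∑ d ∈ s, c d * bernCubicDefect r (g d) x := by
  simp only [bernCubicDefect, bern_sum_mul, mul_sum]
  rw [sum_comm (s := univ)]
  simp only [← sum_add_distrib, ← sum_sub_distrib]
  exact sum_congr rfl fun d _ => by simp only [mul_sub, mul_add, mul_sum]; ring_nf

lemma bernCubicDefect_mul_mul {r : ℕ} (hr : r ≠ 0) (i j k : Fin n) {x : Fin n → ℝ}
    (hx : ∑ t, x t = 1) :
    bernCubicDefect r (fun y => y i * y j * y k) x = 0 := by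
  have hBr := bern_mul_mul_eq hr i j k hx
  have hB2 := bern_mul_mul_eq two_ne_zero i j k hx
  rw [Nat.cast_descFactorial_three, Nat.cast_descFactorial_two] at hBr hB2
  push_cast at hB2
  refine mul_left_cancel₀ (Nat.cast_ne_zero.2 hr : (r : ℝ) ≠ 0) ?_
  rw [bernCubicDefect, sum_mul_single_mul_single_mul_single]
  linear_combination hBr - (r * (r - 1) / 2) * hB2

lemma prod_pow_single_add_single_add_single (i j k : Fin n) (y : Fin n → ℝ) :
    ∏ t, y t ^ (Finsupp.single i 1 + Finsupp.single j 1 + Finsupp.single k 1 : Fin n →₀ ℕ) t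
      = y i * y j * y k := by
  simp only [Finsupp.coe_add, Pi.add_apply, pow_add, prod_mul_distrib]
  simp [Finsupp.single_apply, pow_ite]

open MvPolynomial in
lemma bernCubicDefect_eval_eq_zero {r : ℕ} (hr : r ≠ 0) {p : MvPolynomial (Fin n) ℝ}
    (hp : p.IsHomogeneous 3) {x : Fin n → ℝ} (hx : ∑ t, x t = 1) :
    bernCubicDefect r (fun y => eval y p) x = 0 := by
  simp only [eval_eq']
  rw [bernCubicDefect_sum_mul]
  refine sum_eq_zero fun d hd => ?_
  obtain ⟨i, j, k, rfl⟩ := Finsupp.exists_eq_single_add_single_add_single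
    (by rw [Finsupp.degree_eq_weight_one]; exact hp (mem_support_iff.1 hd))
  simp only [prod_pow_single_add_single_add_single, bernCubicDefect_mul_mul hr i j k hx,
    mul_zero]

end

theorem stmt9 (n r : ℕ) (hr : 2 ≤ r) (p : MvPolynomial (Fin n) ℝ)
    (hp : p.IsHomogeneous 3) (fmin fmax : ℝ)
    (hmin : IsLeast ((fun y => MvPolynomial.eval y p) '' stdSimplex ℝ (Fin n)) fmin)
    (hmax : IsGreatest ((fun y => MvPolynomial.eval y p) '' stdSimplex ℝ (Fin n)) fmax)
    (x : Fin n → ℝ) (hx : x ∈ stdSimplex ℝ (Fin n)) :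
    bern r (fun y => MvPolynomial.eval y p) x - MvPolynomial.eval x p
      ≤ (4 / r - 4 / (r : ℝ) ^ 2) * (fmax - fmin) := by
  have hidentity := bernCubicDefect_eval_eq_zero (r := r) (by omega) hp hx.2
  rw [bernCubicDefect, sub_eq_zero] at hidentity
  have hfx : fmin ≤ MvPolynomial.eval x p := hmin.2 ⟨x, hx, rfl⟩
  have hvertices : fmin ≤ ∑ c, x c * MvPolynomial.eval (Pi.single c 1) p :=
    le_sum_mul_of_mem_stdSimplex hx fun c => hmin.2 ⟨_, single_mem_stdSimplex ℝ c, rfl⟩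
  have hB2 : bern 2 (fun y => MvPolynomial.eval y p) x ≤ fmax :=
    bern_le_of_forall_le two_ne_zero (fun y hy => hmax.2 ⟨y, hy, rfl⟩) hx
  have hr' : (2 : ℝ) ≤ r := by exact_mod_cast hr
  rw [show 4 / (r : ℝ) - 4 / (r : ℝ) ^ 2 = 4 * (r - 1) / r ^ 2 by field_simp,
    div_mul_eq_mul_div, le_div_iff₀ (by positivity)]
  linarith [mul_le_mul_of_nonneg_left hB2 (by linarith : (0 : ℝ) ≤ 4 * (r - 1)),
    mul_le_mul_of_nonneg_left hfx (by linarith : (0 : ℝ) ≤ 3 * r - 2),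
    mul_le_mul_of_nonneg_left hvertices (by linarith : (0 : ℝ) ≤ r - 2)]
end

section
/- For any subset I ⊆ [n] with |I| = d, any integer r ≥ 1, and any x ∈ Δ_n, the Bernstein approximation of the square-free monomial x^I = Π_{i∈I} x_i satisfies B_r(x^I)(x) = (r·(r−1)···(r−d+1)/r^d)·x^I. -/
/-! Only the multi-indices `α` with `α i ≥ 1` for all `i ∈ I` contribute to `B_r(x^I)`, and these
are exactly `α = β + 𝟙[I]` with `|β| = r - d`. For them `∏_{i ∈ I} α i * multinomial α` equals
`r^{d̲} * multinomial β`, so the multinomial theorem gives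
`B_r(x^I)(x) = r^{d̲} / r^d * x^I * (∑ i, x i)^(r - d)`, and `∑ i, x i = 1` on the simplex. -/

open Finset
open scoped Nat

local notation "𝟙[" I "]" => Set.indicator (M := ℕ) (SetLike.coe I) 1

lemma prod_div_eq_zero_of_not_indicator_le {ι : Type*} {I : Finset ι} {α : ι → ℕ}
    (h : ¬ 𝟙[I] ≤ α) (r : ℝ) : ∏ i ∈ I, (α i : ℝ) / r = 0 := by
  obtain ⟨i, hi⟩ := not_forall.1 h
  rw [not_le] at hi
  have hiI : i ∈ I := Set.mem_of_indicator_ne_zero (Nat.ne_zero_of_lt hi)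
  have hαi : α i = 0 := by simpa [hiI] using hi
  exact prod_eq_zero hiI (by simp [hαi])

section

variable {ι : Type*} [Fintype ι] [DecidableEq ι]

lemma mem_map_addRightEmbedding_piAntidiag_univ {e : ι → ℕ} {d : ℕ} (he : ∑ i, e i = d)
    {m : ℕ} {α : ι → ℕ} :
    α ∈ (piAntidiag univ m).map (addRightEmbedding e) ↔ α ∈ piAntidiag univ (m + d) ∧ e ≤ α := by
  simp only [mem_piAntidiag, mem_univ, implies_true, and_true, mem_map, addRightEmbedding_apply]
  constructor
  · rintro ⟨β, hβ, rfl⟩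
    exact ⟨by simp only [Pi.add_apply, sum_add_distrib, hβ, he], le_add_self⟩
  · rintro ⟨hsum, hle⟩
    refine ⟨α - e, ?_, tsub_add_cancel_of_le hle⟩
    simp only [Pi.sub_apply, sum_tsub_distrib _ fun i _ => hle i, hsum, he, Nat.add_sub_cancel]

lemma sum_indicator_one_eq_card (I : Finset ι) : ∑ i, 𝟙[I] i = #I := by
  simp [Set.indicator_apply]

lemma prod_factorial_add_indicator (β : ι → ℕ) (I : Finset ι) :
    ∏ i, ((β + 𝟙[I]) i)! = (∏ i, (β i)!) * ∏ i ∈ I, (β i + 1) := by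
  rw [← Fintype.prod_ite_mem I, ← prod_mul_distrib]
  refine prod_congr rfl fun i _ => ?_
  by_cases hi : i ∈ I <;> simp [hi, Nat.factorial_succ, mul_comm]

lemma prod_pow_add_indicator {R : Type*} [CommMonoid R] (x : ι → R) (β : ι → ℕ) (I : Finset ι) :
    ∏ i, x i ^ (β + 𝟙[I]) i = (∏ i, x i ^ β i) * ∏ i ∈ I, x i := by
  rw [← Fintype.prod_ite_mem I, ← prod_mul_distrib]
  refine prod_congr rfl fun i _ => ?_
  by_cases hi : i ∈ I <;> simp [hi, pow_succ]

lemma multinomial_add_indicator_mul_prod (β : ι → ℕ) (I : Finset ι) :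
    Nat.multinomial univ (β + 𝟙[I]) * ∏ i ∈ I, (β i + 1) =
      (∑ i, β i + #I).descFactorial #I * Nat.multinomial univ β := by
  refine Nat.eq_of_mul_eq_mul_left (Nat.prod_factorial_pos univ β) ?_
  have hsum : ∑ i, (β + 𝟙[I]) i = ∑ i, β i + #I := by
    rw [Pi.add_def, sum_add_distrib, sum_indicator_one_eq_card]
  calc (∏ i, (β i)!) * (Nat.multinomial univ (β + 𝟙[I]) * ∏ i ∈ I, (β i + 1))
      = (∏ i, ((β + 𝟙[I]) i)!) * Nat.multinomial univ (β + 𝟙[I]) := by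
        rw [prod_factorial_add_indicator]; ring
    _ = (∑ i, β i + #I)! := by rw [Nat.multinomial_spec, hsum]
    _ = (∑ i, β i)! * (∑ i, β i + #I).descFactorial #I := by
        rw [← Nat.factorial_mul_descFactorial (Nat.le_add_left _ _), Nat.add_sub_cancel]
    _ = (∏ i, (β i)!) * ((∑ i, β i + #I).descFactorial #I * Nat.multinomial univ β) := by
        rw [← Nat.multinomial_spec]; ring

end

lemma cast_multinomial_eq_div {ι K : Type*} [Field K] [CharZero K] (s : Finset ι) (α : ι → ℕ) :
    (Nat.multinomial s α : K) = ((∑ i ∈ s, α i)! : K) / ∏ i ∈ s, ((α i)! : K) := by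
  rw [eq_div_iff (mod_cast (Nat.prod_factorial_pos s α).ne'), mul_comm]
  exact_mod_cast Nat.multinomial_spec s α

lemma bern_eq_sum_piAntidiag {n : ℕ} (r : ℕ) (f : (Fin n → ℝ) → ℝ) (x : Fin n → ℝ) :
    bern r f x = ∑ α ∈ piAntidiag univ r,
      f (fun i => (α i : ℝ) / r) * Nat.multinomial univ α * ∏ i, x i ^ α i := by
  rw [bern, ← piAntidiag_univ_fin_eq_antidiagonalTuple]
  refine sum_congr rfl fun α hα => ?_
  rw [cast_multinomial_eq_div, (mem_piAntidiag.1 hα).1]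

lemma bern_prod_of_lt_card {n r : ℕ} {I : Finset (Fin n)} (hr : r < #I) (x : Fin n → ℝ) :
    bern r (fun y => ∏ i ∈ I, y i) x = 0 := by
  rw [bern_eq_sum_piAntidiag]
  refine sum_eq_zero fun α hα => ?_
  have hle : ¬ 𝟙[I] ≤ α := fun hle => by
    have := sum_le_sum fun i (_ : i ∈ univ) => hle i
    rw [sum_indicator_one_eq_card, (mem_piAntidiag.1 hα).1] at this
    omega
  rw [prod_div_eq_zero_of_not_indicator_le hle, zero_mul, zero_mul]

lemma bern_prod_add_card {n : ℕ} (m : ℕ) (I : Finset (Fin n)) (x : Fin n → ℝ) :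
    bern (m + #I) (fun y => ∏ i ∈ I, y i) x =
      ((m + #I).descFactorial #I : ℝ) / (m + #I : ℕ) ^ #I * (∏ i ∈ I, x i) * (∑ i, x i) ^ m := by
  have hmem (α : Fin n → ℕ) :=
    mem_map_addRightEmbedding_piAntidiag_univ (m := m) (α := α) (sum_indicator_one_eq_card I)
  rw [bern_eq_sum_piAntidiag, ← sum_subset (fun α hα => ((hmem α).1 hα).1), sum_map,
    sum_pow_eq_sum_piAntidiag, mul_sum]
  · refine sum_congr rfl fun β hβ => ?_
    have hcoeff : (∏ i ∈ I, ((β + 𝟙[I]) i : ℝ)) * Nat.multinomial univ (β + 𝟙[I]) =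
        (m + #I).descFactorial #I * Nat.multinomial univ β := by
      have h := multinomial_add_indicator_mul_prod β I
      rw [show ∑ i, β i = m from (mem_piAntidiag.1 hβ).1] at h
      have hprod : ∏ i ∈ I, ((β + 𝟙[I]) i : ℝ) = ∏ i ∈ I, ((β i + 1 : ℕ) : ℝ) :=
        prod_congr rfl fun i hi => by simp [hi]
      rw [mul_comm, hprod]
      exact_mod_cast h
    rw [addRightEmbedding_apply, prod_pow_add_indicator, prod_div_distrib, prod_const]
    linear_combination (∏ i ∈ I, x i) * (∏ i, x i ^ β i) / (m + #I : ℕ) ^ #I * hcoeff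
  · intro α hα hα'
    have hle : ¬ 𝟙[I] ≤ α := fun hle => hα' ((hmem α).2 ⟨hα, hle⟩)
    rw [prod_div_eq_zero_of_not_indicator_le hle, zero_mul, zero_mul]

theorem stmt11_general (n r d : ℕ) (I : Finset (Fin n)) (hI : I.card = d)
    (x : Fin n → ℝ) (hx : x ∈ stdSimplex ℝ (Fin n)) :
    bern r (fun y => ∏ i ∈ I, y i) x
      = ((r.descFactorial d : ℝ) / (r : ℝ) ^ d) * ∏ i ∈ I, x i := by
  subst hI
  rcases lt_or_ge r #I with hr | hr
  · rw [bern_prod_of_lt_card hr, Nat.descFactorial_eq_zero_iff_lt.2 hr, Nat.cast_zero, zero_div,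
      zero_mul]
  · obtain ⟨m, rfl⟩ := Nat.exists_eq_add_of_le' hr
    rw [bern_prod_add_card, hx.2, one_pow, mul_one]

theorem stmt11 (n r d : ℕ) (hr : 1 ≤ r) (I : Finset (Fin n)) (hI : I.card = d)
    (x : Fin n → ℝ) (hx : x ∈ stdSimplex ℝ (Fin n)) :
    bern r (fun y => ∏ i ∈ I, y i) x
      = ((r.descFactorial d : ℝ) / (r : ℝ) ^ d) * ∏ i ∈ I, x i :=
  stmt11_general n r d I hI x hx
end

section
/- For any square-free (multilinear) homogeneous polynomial f of degree d in n variables and any integer r ≥ 1, one has f_{Δ(n,r)} − f̲ ≤ (1 − r^{d̲}/r^d)·(f̄ − f̲). -/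
open Finset

theorem Nat.succ_descFactorial_eq_add (r k : ℕ) :
    (r + 1).descFactorial k = r.descFactorial k + k * r.descFactorial (k - 1) := by
  cases k with
  | zero => simp
  | succ k =>
    rw [Nat.succ_descFactorial_succ, Nat.descFactorial_succ, add_tsub_cancel_right, ← add_mul]
    rcases le_or_gt k r with hkr | hrk
    · congr 1; omega
    · simp [Nat.descFactorial_eq_zero_iff_lt.2 hrk]

theorem prod_add_ite_eq {ι R : Type*} [DecidableEq ι] [CommSemiring R] (a : ι → R)
    (I : Finset ι) (j : ι) :
    ∏ i ∈ I, (a i + if j = i then 1 else 0) =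
      ∏ i ∈ I, a i + if j ∈ I then ∏ i ∈ I.erase j, a i else 0 := by
  split_ifs with hj
  · have hrest : ∏ i ∈ I.erase j, (a i + if j = i then 1 else 0) = ∏ i ∈ I.erase j, a i :=
      prod_congr rfl fun i hi => by rw [if_neg (ne_of_mem_erase hi).symm, add_zero]
    rw [← mul_prod_erase I _ hj, ← mul_prod_erase I a hj, hrest, if_pos rfl, add_one_mul]
  · rw [add_zero]
    exact prod_congr rfl fun i hi => by rw [if_neg (ne_of_mem_of_not_mem hi hj).symm, add_zero]

section Occupancy

variable {ι : Type*} [DecidableEq ι] {r : ℕ}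

def occupancy (ω : Fin r → ι) (i : ι) : ℕ := #{t | ω t = i}

theorem occupancy_cons (j : ι) (ω : Fin r → ι) (i : ι) :
    occupancy (Fin.cons j ω : Fin (r + 1) → ι) i = occupancy ω i + if j = i then 1 else 0 := by
  simp only [occupancy, Fin.card_filter_univ_succ, Fin.cons_zero, Fin.cons_succ]
  split_ifs <;> rfl

theorem sum_occupancy [Fintype ι] (ω : Fin r → ι) : ∑ i, occupancy ω i = r := by
  simp only [occupancy]
  simpa using (card_eq_sum_card_fiberwise (f := ω) (s := univ) (t := univ)
    fun _ _ => mem_univ _).symm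

/-- Factorial moments of the multinomial distribution; induct on `r` by splitting off the first
draw. -/
theorem sum_prod_mul_prod_occupancy [Fintype ι] (x : ι → ℝ) (hx : ∑ i, x i = 1)
    (I : Finset ι) :
    ∑ ω : Fin r → ι, (∏ t, x (ω t)) * ∏ i ∈ I, (occupancy ω i : ℝ) =
      r.descFactorial #I * ∏ i ∈ I, x i := by
  induction r generalizing I with
  | zero =>
    cases I.eq_empty_or_nonempty with
    | inl hI => simp [hI]
    | inr hI =>
      obtain ⟨k, hk⟩ := Nat.exists_eq_add_of_lt hI.card_pos
      simp [occupancy, hk]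
  | succ r ih =>
    rw [← (Fin.consEquiv fun _ => ι).sum_comp, Fintype.sum_prod_type]
    simp only [Fin.consEquiv, Equiv.coe_fn_mk, Fin.prod_univ_succ, Fin.cons_zero, Fin.cons_succ,
      occupancy_cons]
    push_cast [prod_add_ite_eq]
    have hstep (j : ι) : ∑ ω : Fin r → ι, (x j * ∏ t, x (ω t)) *
        (∏ i ∈ I, (occupancy ω i : ℝ) +
          if j ∈ I then ∏ i ∈ I.erase j, (occupancy ω i : ℝ) else 0) =
          x j * (r.descFactorial #I * ∏ i ∈ I, x i) +
            if j ∈ I then r.descFactorial (#I - 1) * ∏ i ∈ I, x i else 0 := by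
      split_ifs with hj
      · simp only [mul_add, sum_add_distrib, mul_assoc, ← mul_sum, ih, card_erase_of_mem hj]
        rw [← mul_prod_erase I x hj]
        ring
      · simp only [add_zero, mul_assoc, ← mul_sum, ih]
    simp_rw [hstep, sum_add_distrib, ← sum_mul, hx, sum_ite_mem, univ_inter, sum_const,
      Nat.succ_descFactorial_eq_add]
    push_cast
    ring

end Occupancy

theorem nonempty_of_mem_stdSimplex {ι : Type*} [Fintype ι] {x : ι → ℝ}
    (hx : x ∈ stdSimplex ℝ ι) : Nonempty ι :=
  let ⟨i, _⟩ := exists_ne_zero_of_sum_ne_zero (hx.2 ▸ one_ne_zero)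
  ⟨i⟩

section SquarefreeForm

variable {ι : Type*} [Fintype ι] [DecidableEq ι]

def squarefreeForm (c : Finset ι → ℝ) (d : ℕ) (y : ι → ℝ) : ℝ :=
  ∑ I ∈ univ.powersetCard d, c I * ∏ i ∈ I, y i

theorem squarefreeForm_single_one (c : Finset ι → ℝ) {d : ℕ} (hd : 2 ≤ d) (j : ι) :
    squarefreeForm c d (Pi.single j 1) = 0 := by
  refine sum_eq_zero fun I hI => ?_
  obtain ⟨i, hi, hij⟩ := exists_mem_ne (by rw [(mem_powersetCard.1 hI).2]; omega) j
  rw [prod_eq_zero hi (Pi.single_eq_of_ne hij 1), mul_zero]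

theorem sum_prod_mul_squarefreeForm_occupancy (x : ι → ℝ) (hx : ∑ i, x i = 1)
    (c : Finset ι → ℝ) (d r : ℕ) :
    ∑ ω : Fin r → ι, (∏ t, x (ω t)) * squarefreeForm c d (fun i => occupancy ω i / r) =
      r.descFactorial d / r ^ d * squarefreeForm c d x := by
  simp only [squarefreeForm, mul_sum, prod_div_distrib, prod_const]
  rw [sum_comm]
  refine sum_congr rfl fun I hI => ?_
  calc _ = c I / r ^ #I *
        ∑ ω : Fin r → ι, (∏ t, x (ω t)) * ∏ i ∈ I, (occupancy ω i : ℝ) := by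
        rw [mul_sum]
        exact sum_congr rfl fun _ _ => by ring
    _ = _ := by
        rw [sum_prod_mul_prod_occupancy x hx, (mem_powersetCard.1 hI).2]
        ring

theorem exists_squarefreeForm_occupancy_le {x : ι → ℝ} (hx : x ∈ stdSimplex ℝ ι)
    (c : Finset ι → ℝ) (d r : ℕ) :
    ∃ ω : Fin r → ι, squarefreeForm c d (fun i => occupancy ω i / r) ≤
      r.descFactorial d / r ^ d * squarefreeForm c d x := by
  have := nonempty_of_mem_stdSimplex hx
  set g := fun ω : Fin r → ι => squarefreeForm c d (fun i => occupancy ω i / r)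
  obtain ⟨ω₀, -, hω₀⟩ := exists_min_image univ g univ_nonempty
  refine ⟨ω₀, ?_⟩
  rw [← sum_prod_mul_squarefreeForm_occupancy x hx.2]
  calc g ω₀ = ∑ ω : Fin r → ι, (∏ t, x (ω t)) * g ω₀ := by
        rw [← sum_mul, ← Fintype.sum_pow, hx.2, one_pow, one_mul]
    _ ≤ ∑ ω : Fin r → ι, (∏ t, x (ω t)) * g ω :=
        sum_le_sum fun ω _ => mul_le_mul_of_nonneg_left (hω₀ ω (mem_univ ω))
          (prod_nonneg fun t _ => hx.1 (ω t))

end SquarefreeForm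

theorem occupancy_div_mem_grid {n r : ℕ} (hr : 0 < r) (ω : Fin r → Fin n) :
    (fun i => (occupancy ω i : ℝ) / r) ∈ grid n r := by
  have hr' : (r : ℝ) ≠ 0 := by positivity
  refine ⟨⟨fun i => by positivity, ?_⟩,
    fun i => ⟨occupancy ω i, mul_div_cancel₀ _ hr'⟩⟩
  rw [← sum_div, ← Nat.cast_sum, sum_occupancy, div_self hr']

theorem stmt12 (n r d : ℕ) (hr : 1 ≤ r) (c : Finset (Fin n) → ℝ)
    (fmin fmax fgrid : ℝ)
    (hmin : IsLeast
      ((fun y : Fin n → ℝ => ∑ I ∈ Finset.univ.powersetCard d, c I * ∏ i ∈ I, y i) ''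
        stdSimplex ℝ (Fin n)) fmin)
    (hmax : IsGreatest
      ((fun y : Fin n → ℝ => ∑ I ∈ Finset.univ.powersetCard d, c I * ∏ i ∈ I, y i) ''
        stdSimplex ℝ (Fin n)) fmax)
    (hgrid : IsLeast
      ((fun y : Fin n → ℝ => ∑ I ∈ Finset.univ.powersetCard d, c I * ∏ i ∈ I, y i) ''
        grid n r) fgrid) :
    fgrid - fmin ≤ (1 - (r.descFactorial d : ℝ) / (r : ℝ) ^ d) * (fmax - fmin) := by
  change IsLeast (squarefreeForm c d '' _) fmin at hmin
  change IsGreatest (squarefreeForm c d '' _) fmax at hmax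
  change IsLeast (squarefreeForm c d '' _) fgrid at hgrid
  set s : ℝ := (r.descFactorial d : ℝ) / (r : ℝ) ^ d
  obtain ⟨⟨x, hx, rfl⟩, -⟩ := hmin
  obtain ⟨ω, hω⟩ := exists_squarefreeForm_occupancy_le hx c d r
  have hgrid_le : fgrid ≤ s * squarefreeForm c d x :=
    (hgrid.2 ⟨_, occupancy_div_mem_grid hr ω, rfl⟩).trans hω
  have hs : s ≤ 1 :=
    div_le_one_of_le₀ (by exact_mod_cast Nat.descFactorial_le_pow r d) (by positivity)
  have hfmax : 0 ≤ (1 - s) * fmax := by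
    rcases le_or_gt d 1 with hd | hd
    · have hs_eq : s = 1 := by
        obtain rfl | rfl : d = 0 ∨ d = 1 := by omega
        · simp [s]
        · simp [s, (by positivity : (r : ℝ) ≠ 0)]
      simp [hs_eq]
    · obtain ⟨j⟩ := nonempty_of_mem_stdSimplex hx
      have hvertex := hmax.2 ⟨_, single_mem_stdSimplex ℝ j, rfl⟩
      rw [squarefreeForm_single_one c hd j] at hvertex
      exact mul_nonneg (sub_nonneg.2 hs) hvertex
  linear_combination hgrid_le + hfmax
end

section
/- Let k < d be positive integers and α ∈ ℕ^n with |α| = k. Then S(d,k) = (α!/k!)·Σ_{β∈I(n,d)} (d!/β!)·Π_{i=1}^n S(β_i, α_i), where S denotes Stirling numbers of the second kind. -/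
/-!
With `M(γ) = |γ|! / ∏ γᵢ!` the identity reads `M(α) S(d, |α|) = ∑_{|β| = d} M(β) ∏ S(βᵢ, αᵢ)`.
Both sides count the partitions of a `d`-set into `|α|` blocks together with a colouring of the
blocks in which colour `i` is used `αᵢ` times; on the right, `βᵢ` is the number of points that
receive colour `i`. For two colours this is the convolution
`C(p+q, p) S(d, p+q) = ∑ C(d, a) S(a, p) S(d-a, q)`, which follows by induction on `d` from the
recurrence of `S` and Pascal's rule; the general case follows by induction on the set of colours.
-/

/-- Stirling numbers of the second kind. -/
def stirling : ℕ → ℕ → ℕ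
  | 0, 0 => 1
  | 0, _ + 1 => 0
  | _ + 1, 0 => 0
  | m + 1, k + 1 => stirling m k + (k + 1) * stirling m (k + 1)

open Finset

theorem stirling_eq_stirlingSecond : stirling = Nat.stirlingSecond := by
  funext m k
  induction m generalizing k with
  | zero => cases k <;> rfl
  | succ m ih => cases k <;> simp [stirling, Nat.stirlingSecond_succ_succ, ih, add_comm]

namespace Nat

theorem cast_multinomial {ι K : Type*} [Semifield K] [CharZero K] (s : Finset ι) (f : ι → ℕ) :
    (multinomial s f : K) = (∑ i ∈ s, f i).factorial / ∏ i ∈ s, ((f i).factorial : K) := by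
  rw [eq_div_iff (prod_ne_zero_iff.2 fun i _ => by exact_mod_cast factorial_ne_zero _), mul_comm]
  exact_mod_cast multinomial_spec s f

theorem choose_mul_stirlingSecond_add (d p q : ℕ) :
    (p + q).choose p * stirlingSecond d (p + q) =
      ∑ ij ∈ antidiagonal d,
        d.choose ij.1 * (stirlingSecond ij.1 p * stirlingSecond ij.2 q) := by
  induction d generalizing p q with
  | zero => rcases p with _ | p <;> rcases q with _ | q <;> simp [← add_assoc]
  | succ d ih =>
    rcases p with _ | p
    · simp [Nat.sum_antidiagonal_succ]
    rcases q with _ | q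
    · simp [Nat.sum_antidiagonal_succ']
    have hsucc_right : ∀ ij ∈ antidiagonal d,
        d.choose ij.1 * (stirlingSecond ij.1 (p + 1) * stirlingSecond (ij.2 + 1) (q + 1)) =
          (q + 1) * (d.choose ij.1 * (stirlingSecond ij.1 (p + 1) * stirlingSecond ij.2 (q + 1))) +
            d.choose ij.1 * (stirlingSecond ij.1 (p + 1) * stirlingSecond ij.2 q) := by
      intros; rw [stirlingSecond_succ_succ]; ring
    have hsucc_left : ∀ ij ∈ antidiagonal d,
        d.choose ij.2 * (stirlingSecond (ij.1 + 1) (p + 1) * stirlingSecond ij.2 (q + 1)) =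
          (p + 1) * (d.choose ij.1 * (stirlingSecond ij.1 (p + 1) * stirlingSecond ij.2 (q + 1))) +
            d.choose ij.1 * (stirlingSecond ij.1 p * stirlingSecond ij.2 (q + 1)) := by
      rintro ij hij
      rw [choose_symm_of_eq_add (mem_antidiagonal.1 hij).symm, stirlingSecond_succ_succ]; ring
    have hpascal := sum_antidiagonal_choose_succ_mul (R := ℕ)
      (fun i j => stirlingSecond i (p + 1) * stirlingSecond j (q + 1)) d
    simp only [Nat.cast_id] at hpascal
    rw [hpascal, sum_congr rfl hsucc_right, sum_congr rfl hsucc_left, sum_add_distrib,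
      sum_add_distrib, ← mul_sum, ← mul_sum, ← ih, ← ih, ← ih,
      show p + 1 + (q + 1) = p + q + 1 + 1 by ring, show p + 1 + q = p + q + 1 by ring,
      show p + (q + 1) = p + q + 1 by ring, stirlingSecond_succ_succ, choose_succ_succ (p + q + 1)]
    ring

theorem multinomial_mul_stirlingSecond_sum {ι : Type*} [DecidableEq ι] (s : Finset ι)
    (α : ι → ℕ) (d : ℕ) :
    multinomial s α * stirlingSecond d (∑ i ∈ s, α i) =
      ∑ β ∈ piAntidiag s d, multinomial s β * ∏ i ∈ s, stirlingSecond (β i) (α i) := by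
  induction s using Finset.cons_induction generalizing d with
  | empty => cases d <;> simp
  | cons i s hi ih =>
    rw [piAntidiag_cons, sum_disjiUnion, multinomial_cons, sum_cons, mul_right_comm,
      choose_mul_stirlingSecond_add, sum_mul]
    refine sum_congr rfl fun ab hab => ?_
    rw [sum_map, mul_assoc, mul_assoc, mul_comm (stirlingSecond ab.2 _), ih, mul_sum, mul_sum]
    refine sum_congr rfl fun β hβ => ?_
    obtain ⟨hβs, hβ⟩ := mem_piAntidiag.1 hβ
    have hβi : β i = 0 := by_contra fun h => hi (hβ i h)
    have hs : ∀ j ∈ s, (β + fun t => if t = i then ab.1 else 0) j = β j := by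
      intro j hj; simp [show j ≠ i by rintro rfl; exact hi hj]
    have hi' : (β + fun t => if t = i then ab.1 else 0) i = ab.1 := by simp [hβi]
    rw [addRightEmbedding_apply, multinomial_cons, prod_cons, multinomial_congr hs,
      prod_congr rfl fun j hj => congrArg (stirlingSecond · (α j)) (hs j hj), sum_congr rfl hs,
      hβs, hi', mem_antidiagonal.1 hab]
    ring

end Nat

theorem stmt15_general (n d k : ℕ) (α : Fin n → ℕ) (hα : ∑ i, α i = k) :
    (stirling d k : ℝ)
      = ((∏ i, ((α i).factorial : ℝ)) / (k.factorial : ℝ)) *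
        ∑ β ∈ Finset.Nat.antidiagonalTuple n d,
          ((d.factorial : ℝ) / ∏ i, ((β i).factorial : ℝ)) *
            ∏ i, (stirling (β i) (α i) : ℝ) := by
  rw [stirling_eq_stirlingSecond, ← piAntidiag_univ_fin_eq_antidiagonalTuple]
  have hαk : (Nat.multinomial univ α : ℝ) = k.factorial / ∏ i, ((α i).factorial : ℝ) := by
    rw [Nat.cast_multinomial, hα]
  calc (d.stirlingSecond k : ℝ)
      = (∏ i, ((α i).factorial : ℝ)) / k.factorial *
          (Nat.multinomial univ α * d.stirlingSecond k) := by
        rw [hαk]; field_simp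
    _ = (∏ i, ((α i).factorial : ℝ)) / k.factorial * ∑ β ∈ piAntidiag univ d,
          (Nat.multinomial univ β : ℝ) * ∏ i, ((β i).stirlingSecond (α i) : ℝ) := by
        rw [← hα]
        exact congrArg _ (mod_cast (Nat.multinomial_mul_stirlingSecond_sum univ α d))
    _ = _ := by
        refine congrArg _ (sum_congr rfl fun β hβ => ?_)
        rw [Nat.cast_multinomial, (mem_piAntidiag.1 hβ).1]

theorem stmt15 (n d k : ℕ) (hk : 0 < k) (hkd : k < d) (α : Fin n → ℕ) (hα : ∑ i, α i = k) :
    (stirling d k : ℝ)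
      = ((∏ i, ((α i).factorial : ℝ)) / (k.factorial : ℝ)) *
        ∑ β ∈ Finset.Nat.antidiagonalTuple n d,
          ((d.factorial : ℝ) / ∏ i, ((β i).factorial : ℝ)) *
            ∏ i, (stirling (β i) (α i) : ℝ) :=
  stmt15_general n d k α hα
end

section
/- For f = x₁³ + x₂³ on the standard simplex Δ₂ and integer r ≥ 1, one has B_r(f)(x) = 1 + (3/r − 3)·x₁x₂ for all x ∈ Δ₂, and min_{x∈Δ₂} B_r(f)(x) = 1/4 + 3/(4r). -/
lemma natid (m j : ℕ) (hj : j ≤ m) :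
    (j+1)*((m+1-j)*((m+2).choose (j+1))) = (m+2)*((m+1)*(m.choose j)) := by
  have h1 : (m+2) * (m+1).choose j = (m+2).choose (j+1) * (j+1) :=
    Nat.add_one_mul_choose_eq (m+1) j
  have h2 : (m+1) * m.choose (m-j) = (m+1).choose (m-j+1) * (m-j+1) :=
    Nat.add_one_mul_choose_eq m (m-j)
  have h3 : (m+1).choose (m+1-j) = (m+1).choose j := Nat.choose_symm (by omega)
  have h4 : m.choose (m-j) = m.choose j := Nat.choose_symm hj
  have h5 : m + 1 - j = m - j + 1 := by omega
  calc (j+1)*((m+1-j)*((m+2).choose (j+1)))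
      = ((m+2).choose (j+1) * (j+1)) * (m+1-j) := by ring
    _ = ((m+2) * (m+1).choose j) * (m+1-j) := by rw [h1]
    _ = (m+2) * ((m+1).choose (m-j+1) * (m-j+1)) := by rw [← h3, h5]; ring
    _ = (m+2) * ((m+1) * m.choose j) := by rw [← h2, h4]

lemma keysum (r : ℕ) (x y : ℝ) (h : x + y = 1) :
    ∑ k ∈ Finset.range (r+1), (k:ℝ)*((r:ℝ)-(k:ℝ)) * (r.choose k) * x^k * y^(r-k)
      = (r:ℝ)*((r:ℝ)-1)*x*y := by
  match r with
  | 0 => simp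
  | 1 => norm_num [Finset.sum_range_succ]
  | (m+2) =>
    rw [Finset.sum_range_succ', Finset.sum_range_succ]
    have hmid : ∑ j ∈ Finset.range (m+1),
        ((j+1:ℕ):ℝ)*(((m+2:ℕ):ℝ)-((j+1:ℕ):ℝ)) * ((m+2).choose (j+1)) * x^(j+1) * y^(m+2-(j+1))
        = ((m:ℝ)+2)*((m:ℝ)+1)*x*y * ∑ j ∈ Finset.range (m+1), x^j * y^(m-j) * (m.choose j) := by
      rw [Finset.mul_sum]
      refine Finset.sum_congr rfl fun j hj => ?_
      have hjm : j ≤ m := by simpa [Nat.lt_succ_iff] using Finset.mem_range.mp hj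
      have hexp : m+2-(j+1) = (m-j)+1 := by omega
      have hc := congrArg (Nat.cast : ℕ → ℝ) (natid m j hjm)
      push_cast [Nat.cast_sub (by omega : j ≤ m+1)] at hc
      rw [hexp]
      push_cast
      linear_combination (x^(j+1)*y^((m-j)+1)) * hc
    rw [hmid, ← add_pow, h, one_pow, mul_one]
    push_cast
    ring

lemma bern_eq (r : ℕ) (hr : 1 ≤ r) (x : Fin 2 → ℝ) (hx : x 0 + x 1 = 1) :
    bern r (fun y => y 0 ^ 3 + y 1 ^ 3) x = 1 + (3 / r - 3) * x 0 * x 1 := by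
  unfold bern
  rw [Finset.Nat.antidiagonalTuple_two, Finset.sum_map,
    Finset.Nat.sum_antidiagonal_eq_sum_range_succ_mk]
  simp only [Equiv.coe_toEmbedding, piFinTwoEquiv_symm_apply, Fin.cons_zero, Fin.cons_one,
    Fin.prod_univ_two]
  have hr0 : (r:ℝ) ≠ 0 := by positivity
  have hsum : ∀ k ∈ Finset.range r.succ,
      ((↑k / ↑r) ^ 3 + (↑(r - k) / ↑r) ^ 3) * (↑r.factorial / (↑k.factorial * ↑(r - k).factorial)) *
        (x 0 ^ k * x 1 ^ (r - k))
      = (x 0 ^ k * x 1 ^ (r-k) * ((r.choose k : ℕ):ℝ))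
        - (3/(r:ℝ)^2) * ((k:ℝ)*((r:ℝ)-(k:ℝ)) * (r.choose k) * x 0^k * x 1^(r-k)) := by
    intro k hk
    have hkr : k ≤ r := by
      have := Finset.mem_range.mp hk; omega
    have hfac : (r.factorial:ℝ) = (r.choose k) * ((k.factorial:ℝ) * (r-k).factorial) := by
      rw [← mul_assoc]
      exact_mod_cast (Nat.choose_mul_factorial_mul_factorial hkr).symm
    have hne : ((k.factorial:ℝ) * (r-k).factorial) ≠ 0 := by positivity
    rw [Nat.cast_sub hkr, hfac, mul_div_assoc, div_self hne, mul_one]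
    field_simp
    ring
  rw [Finset.sum_congr rfl hsum, Finset.sum_sub_distrib, ← Finset.mul_sum,
    keysum r (x 0) (x 1) hx, ← add_pow, hx, one_pow]
  field_simp
  ring

theorem stmt19 (r : ℕ) (hr : 1 ≤ r) :
    (∀ x ∈ stdSimplex ℝ (Fin 2),
      bern r (fun y => y 0 ^ 3 + y 1 ^ 3) x = 1 + (3 / r - 3) * x 0 * x 1) ∧
    IsLeast ((bern r (fun y => y 0 ^ 3 + y 1 ^ 3)) '' stdSimplex ℝ (Fin 2))
      (1 / 4 + 3 / (4 * r)) := by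
  have hc : (1:ℝ) ≤ (r:ℝ) := by exact_mod_cast hr
  have hc0 : (0:ℝ) < (r:ℝ) := by linarith
  have hform : ∀ x ∈ stdSimplex ℝ (Fin 2),
      bern r (fun y => y 0 ^ 3 + y 1 ^ 3) x = 1 + (3 / r - 3) * x 0 * x 1 := by
    intro x hx
    have hx1 : x 0 + x 1 = 1 := by
      have := hx.2
      rwa [Fin.sum_univ_two] at this
    exact bern_eq r hr x hx1
  refine ⟨hform, ⟨![1/2, 1/2], ?_, ?_⟩, ?_⟩
  · constructor
    · intro i; fin_cases i <;> norm_num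
    · rw [Fin.sum_univ_two]; norm_num
  · have hmem : ![1/2, 1/2] ∈ stdSimplex ℝ (Fin 2) := by
      constructor
      · intro i; fin_cases i <;> norm_num
      · rw [Fin.sum_univ_two]; norm_num
    rw [hform _ hmem]
    simp only [Matrix.cons_val_zero, Matrix.cons_val_one, Matrix.head_cons]
    field_simp
    ring
  · rintro v ⟨x, hx, rfl⟩
    rw [hform x hx]
    have hx1 : x 0 + x 1 = 1 := by
      have := hx.2
      rwa [Fin.sum_univ_two] at this
    have h0 : 0 ≤ x 0 := hx.1 0
    have h1 : 0 ≤ x 1 := hx.1 1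
    have hab : x 0 * x 1 ≤ 1/4 := by nlinarith [sq_nonneg (x 0 - x 1)]
    have hneg : 3/(r:ℝ) - 3 ≤ 0 := by
      rw [sub_nonpos, div_le_iff₀ hc0]; nlinarith
    have hmm := mul_le_mul_of_nonpos_left hab hneg
    have e : 1 + (3/(r:ℝ)-3)*(1/4) = 1/4 + 3/(4*(r:ℝ)) := by
      field_simp
      ring
    calc 1/4 + 3/(4*(r:ℝ)) = 1 + (3/(r:ℝ)-3)*(1/4) := e.symm
      _ ≤ 1 + (3/(r:ℝ)-3)*(x 0 * x 1) := by linarith [hmm]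
      _ = 1 + (3/(r:ℝ)-3)*x 0*x 1 := by ring
end
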